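/- Let X be a topological space, Y and Z open subsets with X = Y ∪ Z and Y ∩ Z nonempty, equal to a finite union of maximal path-connected open sets A₁,…,Aₙ. Let 𝒰 and 𝒱 be nerve-consistent open covers of Y and Z respectively. Then the 1-nerve N₁(X, 𝒰 ∪ 𝒱) is isomorphic to the quotient of the disjoint union N₁(Y,𝒰) ⊔ N₁(Z,𝒱) by the relation identifying the vertex v_A in N₁(Y,𝒰) with the vertex v_A in N₁(Z,𝒱) for each A ∈ 𝒰 ∩ 𝒱. -/

import Mathlib

/-- The 1-nerve of a cover `𝒰` of a space: vertices are the members of `𝒰`,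
with an edge between two distinct members whenever they intersect. -/
def Nerve1 {X : Type*} (𝒰 : Set (Set X)) : SimpleGraph 𝒰 where
  Adj A B := A ≠ B ∧ ((A : Set X) ∩ (B : Set X)).Nonempty
  symm := by constructor; rintro A B ⟨hne, x, hx1, hx2⟩; exact ⟨hne.symm, x, hx2, hx1⟩
  loopless := by constructor; rintro A ⟨hne, _⟩; exact hne rfl

/-- The disjoint union of two graphs. -/
def GraphSum {α β : Type*} (G : SimpleGraph α) (H : SimpleGraph β) : SimpleGraph (α ⊕ β) where
  Adj x y :=
    match x, y with
    | Sum.inl a, Sum.inl a' => G.Adj a a'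
    | Sum.inr b, Sum.inr b' => H.Adj b b'
    | _, _ => False
  symm := by
    constructor
    rintro (a | b) (a' | b') h
    · exact G.adj_symm h
    · exact h.elim
    · exact h.elim
    · exact H.adj_symm h
  loopless := by
    constructor
    rintro (a | b) h
    · exact G.loopless.irrefl a h
    · exact H.loopless.irrefl b h

/-- The quotient graph of `G` by an equivalence relation `s` on its vertices:
vertices are the equivalence classes, and distinct classes are adjacent whenever
some edge of `G` joins members of the two classes. -/
def QuotientGraph {α : Type*} (G : SimpleGraph α) (s : Setoid α) :
    SimpleGraph (Quotient s) where
  Adj x y := x ≠ y ∧ ∃ a b : α, Quotient.mk s a = x ∧ Quotient.mk s b = y ∧ G.Adj a b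
  symm := by
    constructor
    rintro x y ⟨hne, a, b, ha, hb, hab⟩
    exact ⟨hne.symm, b, a, hb, ha, G.adj_symm hab⟩
  loopless := by constructor; rintro x ⟨hne, _⟩; exact hne rfl

/-! The nerve of `𝒰 ∪ 𝒱` is the image of `N₁(𝒰) ⊔ N₁(𝒱)` under the surjection
`𝒰 ⊕ 𝒱 → 𝒰 ∪ 𝒱`, and a quotient by the kernel of a surjection is isomorphic to the image.
Nerve-consistency is exactly what rules out new edges between a member of `𝒰` and a member of
`𝒱`: such members can only meet if they are the same set, which is a single vertex of the union. -/

theorem Setoid.ker_codRestrict {ι α : Type*} (f : ι → α) (s : Set α) (h : ∀ x, f x ∈ s) :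
    Setoid.ker (s.codRestrict f h) = Setoid.ker f :=
  Setoid.ext fun _ _ => Subtype.ext_iff

noncomputable def QuotientGraph.kerIsoOfSurjective {α β : Type*} {G : SimpleGraph α}
    {H : SimpleGraph β} (f : α → β) (hf : Function.Surjective f)
    (hadj : ∀ x y, H.Adj x y ↔ x ≠ y ∧ ∃ a b, f a = x ∧ f b = y ∧ G.Adj a b) :
    QuotientGraph G (Setoid.ker f) ≃g H where
  toEquiv := Setoid.quotientKerEquivOfSurjective f hf
  map_rel_iff' {x y} := by
    induction x using Quotient.ind with | _ a =>
    induction y using Quotient.ind with | _ b =>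
    change H.Adj (f a) (f b) ↔ _
    simp only [hadj, QuotientGraph, ne_eq, Quotient.eq, Setoid.ker_def]

namespace Nerve1

variable {X : Type*} (𝒰 𝒱 : Set (Set X))

def sumToUnion : 𝒰 ⊕ 𝒱 → ↥(𝒰 ∪ 𝒱) :=
  Set.codRestrict (Sum.elim Subtype.val Subtype.val) _ (by
    rintro (U | V)
    exacts [Or.inl U.2, Or.inr V.2])

theorem ker_sumToUnion :
    Setoid.ker (sumToUnion 𝒰 𝒱) = Setoid.ker (Sum.elim Subtype.val Subtype.val) :=
  Setoid.ker_codRestrict ..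

theorem sumToUnion_surjective : Function.Surjective (sumToUnion 𝒰 𝒱) := by
  rintro ⟨W, hW | hW⟩
  exacts [⟨Sum.inl ⟨W, hW⟩, rfl⟩, ⟨Sum.inr ⟨W, hW⟩, rfl⟩]

variable {𝒰 𝒱}

theorem union_adj_iff (hcons : ∀ U ∈ 𝒰, ∀ V ∈ 𝒱, (U ∩ V).Nonempty → U = V)
    (x y : ↥(𝒰 ∪ 𝒱)) :
    (Nerve1 (𝒰 ∪ 𝒱)).Adj x y ↔ x ≠ y ∧ ∃ a b, sumToUnion 𝒰 𝒱 a = x ∧ sumToUnion 𝒰 𝒱 b = y ∧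
      (GraphSum (Nerve1 𝒰) (Nerve1 𝒱)).Adj a b := by
  constructor
  · rintro ⟨hxy, hmeet⟩
    obtain ⟨a, rfl⟩ := sumToUnion_surjective 𝒰 𝒱 x
    obtain ⟨b, rfl⟩ := sumToUnion_surjective 𝒰 𝒱 y
    refine ⟨hxy, a, b, rfl, rfl, ?_⟩
    rcases a with U | V <;> rcases b with U' | V'
    · exact ⟨fun h => hxy (h ▸ rfl), hmeet⟩
    · exact hxy (Subtype.ext (hcons _ U.2 _ V'.2 hmeet))
    · exact hxy (Subtype.ext (hcons _ U'.2 _ V.2 (Set.inter_comm _ _ ▸ hmeet)).symm)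
    · exact ⟨fun h => hxy (h ▸ rfl), hmeet⟩
  · rintro ⟨hxy, a, b, rfl, rfl, hab⟩
    refine ⟨hxy, ?_⟩
    rcases a with U | V <;> rcases b with U' | V'
    exacts [hab.2, hab.elim, hab.elim, hab.2]

end Nerve1

theorem nerve1_glue_general {X : Type*}
    (n : ℕ) (A : Fin n → Set X)
    (𝒰 𝒱 : Set (Set X))
    (hcons : ∀ U ∈ 𝒰, ∀ V ∈ 𝒱, (U ∩ V).Nonempty → U = V ∧ ∃ i, U = A i) :
    Nonempty
      (Nerve1 (𝒰 ∪ 𝒱) ≃g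
        QuotientGraph (GraphSum (Nerve1 𝒰) (Nerve1 𝒱))
          (Setoid.ker (Sum.elim (Subtype.val : 𝒰 → Set X)
            (Subtype.val : 𝒱 → Set X)))) := by
  rw [← Nerve1.ker_sumToUnion]
  exact ⟨(QuotientGraph.kerIsoOfSurjective _ (Nerve1.sumToUnion_surjective 𝒰 𝒱)
    (Nerve1.union_adj_iff fun U hU V hV h => (hcons U hU V hV h).1)).symm⟩

/-- Gluing theorem: with `X = Y ∪ Z`, `Y ∩ Z` a nonempty finite union of
maximal path-connected open sets `A₁,…,Aₙ`, and nerve-consistent covers `𝒰` of `Y` and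
`𝒱` of `Z`, the 1-nerve `N₁(X, 𝒰 ∪ 𝒱)` is isomorphic to the quotient of the disjoint
union `N₁(Y,𝒰) ⊔ N₁(Z,𝒱)` identifying the two copies of each vertex `v_A`, `A ∈ 𝒰 ∩ 𝒱`. -/
theorem nerve1_glue {X : Type*} [TopologicalSpace X]
    (Y Z : Set X) (hY : IsOpen Y) (hZ : IsOpen Z) (hunion : Y ∪ Z = Set.univ)
    (hne : (Y ∩ Z).Nonempty)
    (n : ℕ) (A : Fin n → Set X)
    (hAopen : ∀ i, IsOpen (A i))
    (hAsub : ∀ i, A i ⊆ Y ∩ Z)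
    (hApc : ∀ i, IsPathConnected (A i))
    (hAmax : ∀ i, ∀ B : Set X, A i ⊆ B → B ⊆ Y ∩ Z → IsPathConnected B → B = A i)
    (hAcover : ⋃ i, A i = Y ∩ Z)
    (𝒰 𝒱 : Set (Set X)) (hUfin : 𝒰.Finite) (hVfin : 𝒱.Finite)
    (hUopen : ∀ U ∈ 𝒰, IsOpen U) (hVopen : ∀ V ∈ 𝒱, IsOpen V)
    (hUcov : ⋃₀ 𝒰 = Y) (hVcov : ⋃₀ 𝒱 = Z)
    -- nerve-consistency:
    (hAin : ∀ i, A i ∈ 𝒰 ∧ A i ∈ 𝒱)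
    (hcons : ∀ U ∈ 𝒰, ∀ V ∈ 𝒱, (U ∩ V).Nonempty → U = V ∧ ∃ i, U = A i) :
    Nonempty
      (Nerve1 (𝒰 ∪ 𝒱) ≃g
        QuotientGraph (GraphSum (Nerve1 𝒰) (Nerve1 𝒱))
          (Setoid.ker (Sum.elim (Subtype.val : 𝒰 → Set X)
            (Subtype.val : 𝒱 → Set X)))) :=
  nerve1_glue_general n A 𝒰 𝒱 hcons
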